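/- arXiv:1901.00161 — 2 statements merged into one kernel-verified Lean document; each statement's English description precedes it below -/
import Mathlib

section
/- For any elements x, y, z of a Coxeter group W, the degree of the Hecke algebra structure constant f_{x,y,z} is at most min{L(x), L(y), L(z)}, where deg of a nonzero Laurent polynomial is its top degree and deg 0 = -∞. -/
open LaurentPolynomial
open scoped Classical

namespace Weighted

variable {B W : Type} [Group W] {cm : CoxeterMatrix B}

/-- `L` is a positive weight function on the weighted Coxeter group. -/
def IsWeightFunction (cs : CoxeterSystem cm W) (L : W → ℤ) : Prop :=
  (∀ w w' : W, cs.length (w * w') = cs.length w + cs.length w' →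
      L (w * w') = L w + L w') ∧
  (∀ i : B, 0 < L (cs.simple i))

/-- The structure constants `f_{x,y,z}` of the Hecke algebra of `(W,S,L)` in the
standard basis `{T_w}`, characterized by their defining recursion. -/
structure HeckeData (cs : CoxeterSystem cm W) (L : W → ℤ) where
  f : W → W → W → LaurentPolynomial ℤ
  f_finite : ∀ x y : W, {z | f x y z ≠ 0}.Finite
  f_one : ∀ x z : W, f x 1 z = if z = x then 1 else 0
  f_mul_simple : ∀ (x y z : W) (i : B),
    cs.length (y * cs.simple i) = cs.length y + 1 →
    f x (y * cs.simple i) z =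
      f x y (z * cs.simple i) +
      (if cs.length (z * cs.simple i) < cs.length z
        then ((T (L (cs.simple i)) : LaurentPolynomial ℤ) - T (-(L (cs.simple i)))) * f x y z
        else 0)

/-- Kazhdan–Lusztig data: the bar involution coefficients `rbar` (with
`\overline{T_x} = Σ_z rbar x z T_z`), the Kazhdan–Lusztig polynomials `p`
(with `C_y = Σ_x p x y T_x`) and the structure constants `h` of the KL basis
(`C_x C_y = Σ_z h x y z C_z`). -/
structure KLData (cs : CoxeterSystem cm W) (L : W → ℤ) extends HeckeData cs L where
  rbar : W → W → LaurentPolynomial ℤ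
  rbar_finite : ∀ x : W, {z | rbar x z ≠ 0}.Finite
  rbar_one : ∀ z : W, rbar 1 z = if z = 1 then 1 else 0
  rbar_simple_mul : ∀ (x z : W) (i : B),
    cs.length (cs.simple i * x) = cs.length x + 1 →
    rbar (cs.simple i * x) z =
      (∑ᶠ w : W, rbar x w * f (cs.simple i) w z) -
        ((T (L (cs.simple i)) : LaurentPolynomial ℤ) - T (-(L (cs.simple i)))) * rbar x z
  p : W → W → LaurentPolynomial ℤ
  p_finite : ∀ y : W, {x | p x y ≠ 0}.Finite
  p_diag : ∀ y : W, p y y = 1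
  p_length : ∀ x y : W, p x y ≠ 0 → cs.length x ≤ cs.length y
  p_deg : ∀ x y : W, x ≠ y → (p x y).degree < 0
  p_bar : ∀ x y : W, p x y = ∑ᶠ a : W, invert (p a y) * rbar a x
  h : W → W → W → LaurentPolynomial ℤ
  h_finite : ∀ x y : W, {z | h x y z ≠ 0}.Finite
  h_spec : ∀ x y z : W,
    (∑ᶠ a : W, ∑ᶠ b : W, p a x * p b y * f a b z) = ∑ᶠ w : W, h x y w * p z w

variable {cs : CoxeterSystem cm W} {L : W → ℤ}

/-- `x ≤_L y`. -/
def leftLe (D : KLData cs L) (x y : W) : Prop :=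
  Relation.ReflTransGen (fun u w => ∃ c, D.h c u w ≠ 0) y x

/-- `x ≤_R y`. -/
def rightLe (D : KLData cs L) (x y : W) : Prop :=
  Relation.ReflTransGen (fun u w => ∃ c, D.h u c w ≠ 0) y x

/-- `x ≤_{LR} y`. -/
def lrLe (D : KLData cs L) (x y : W) : Prop :=
  Relation.ReflTransGen (fun u w => (∃ c, D.h c u w ≠ 0) ∨ (∃ c, D.h u c w ≠ 0)) y x

def leftEquiv (D : KLData cs L) (x y : W) : Prop := leftLe D x y ∧ leftLe D y x
def rightEquiv (D : KLData cs L) (x y : W) : Prop := rightLe D x y ∧ rightLe D y x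
def lrEquiv (D : KLData cs L) (x y : W) : Prop := lrLe D x y ∧ lrLe D y x

/-- The left cell containing `w`. -/
def leftCell (D : KLData cs L) (w : W) : Set W := {x | leftEquiv D x w}
/-- The right cell containing `w`. -/
def rightCell (D : KLData cs L) (w : W) : Set W := {x | rightEquiv D x w}
/-- The two-sided cell containing `w`. -/
def lrCell (D : KLData cs L) (w : W) : Set W := {x | lrEquiv D x w}

/-- The standard parabolic subgroup `W_I`. -/
def parabolic (cs : CoxeterSystem cm W) (I : Set B) : Subgroup W :=
  Subgroup.closure (cs.simple '' I)

/-- `w` is the longest element `w_I` of the parabolic subgroup `W_I`. -/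
def IsLongestIn (cs : CoxeterSystem cm W) (I : Set B) (w : W) : Prop :=
  w ∈ parabolic cs I ∧ ∀ u ∈ parabolic cs I, cs.length u ≤ cs.length w

/-- `N = max L(w_I)`, the maximum of the weights of the longest elements of the
finite parabolic subgroups of `W`. -/
def NSpec (cs : CoxeterSystem cm W) (L : W → ℤ) (N : ℤ) : Prop :=
  (∃ (I : Set B) (w : W), IsLongestIn cs I w ∧ L w = N) ∧
  ∀ (I : Set B) (w : W), IsLongestIn cs I w → L w ≤ N

/-- `u ∈ M`, i.e. `u` is the longest element of some finite parabolic subgroup and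
`L u = N`. -/
def MemM (cs : CoxeterSystem cm W) (L : W → ℤ) (N : ℤ) (u : W) : Prop :=
  (∃ I : Set B, IsLongestIn cs I u) ∧ L u = N

/-- The set `Λ = {x·u·y (reduced) | x,y ∈ W, u ∈ M}`. -/
def Lam (cs : CoxeterSystem cm W) (L : W → ℤ) (N : ℤ) : Set W :=
  {w | ∃ u a b : W, MemM cs L N u ∧ w = a * u * b ∧
    cs.length w = cs.length a + cs.length u + cs.length b}

/-- The left descent set of `w`, as a set of indices. -/
def lD (cs : CoxeterSystem cm W) (w : W) : Set B := {i | cs.IsLeftDescent w i}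
/-- The right descent set of `w`, as a set of indices. -/
def rD (cs : CoxeterSystem cm W) (w : W) : Set B := {i | cs.IsRightDescent w i}

/-- `B_J = {x ∈ W | R(x) ⊆ S \ J}`. -/
def BJ (cs : CoxeterSystem cm W) (J : Set B) : Set W := {x | ∀ i ∈ J, ¬ cs.IsRightDescent x i}

/-- `U_J = {y ∈ W | L(y) ⊆ S \ J and s w_J y ∉ Λ for all s ∈ J}`. -/
def UJ (cs : CoxeterSystem cm W) (L : W → ℤ) (N : ℤ) (J : Set B) (wJ : W) : Set W :=
  {y | (∀ i ∈ J, ¬ cs.IsLeftDescent y i) ∧ ∀ i ∈ J, cs.simple i * wJ * y ∉ Lam cs L N}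

/-- `a` is Lusztig's `a`-function: `a w = max_{x,y} deg h_{x,y,w}`. -/
def ASpec (D : KLData cs L) (a : W → ℤ) : Prop :=
  ∀ w : W, (∃ x y : W, (D.h x y w).degree = (a w : WithBot ℤ)) ∧
    ∀ x y : W, (D.h x y w).degree ≤ (a w : WithBot ℤ)

/-- `γ_{x,y,z}`: the coefficient of `v^{a(z)}` in `h_{x,y,z⁻¹}`. -/
def gam (D : KLData cs L) (a : W → ℤ) (x y z : W) : ℤ := (D.h x y z⁻¹).coeff (a z)

/-- `β_{x,y,z}`: the coefficient of `v^N` in `f_{x,y,z⁻¹}`. -/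
def bet (D : HeckeData cs L) (N : ℤ) (x y z : W) : ℤ := (D.f x y z⁻¹).coeff N

/-- The Bruhat order on `W`. -/
def bruhatLe (cs : CoxeterSystem cm W) (u w : W) : Prop :=
  Relation.ReflTransGen
    (fun a b => cs.length a < cs.length b ∧ ∃ t, cs.IsReflection t ∧ b = a * t) u w

/-- `x` is indecomposable: `x ∉ M` and `x` admits no factorization
`x = x₁ w_{J''} x₂` with `x₁ ∈ P_{J,J''}∖M`, `x₂ ∈ P_{J'',J'}∖M`. -/
def Indecomposable (cs : CoxeterSystem cm W) (L : W → ℤ) (N : ℤ) (x : W) : Prop :=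
  ¬ MemM cs L N x ∧
  ¬ ∃ (K : Set B) (wK a b : W), IsLongestIn cs K wK ∧ L wK = N ∧
      x = a * wK * b ∧ cs.length x = cs.length a + cs.length wK + cs.length b ∧
      lD cs (a * wK) = lD cs x ∧ rD cs (a * wK) = K ∧ ¬ MemM cs L N (a * wK) ∧
      lD cs (wK * b) = K ∧ rD cs (wK * b) = rD cs x ∧ ¬ MemM cs L N (wK * b)


/-- `Γ_{J,y} = B_J w_J y`. -/
def GammaJ (cs : CoxeterSystem cm W) (J : Set B) (wJ y : W) : Set W :=
  {w | ∃ x ∈ BJ cs J, w = x * wJ * y}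

/-- The Coxeter matrix of a rank-3 affine Weyl group (`Ã₂`, `C̃₂` or `G̃₂`). -/
def IsAffineRank3 (cm : CoxeterMatrix B) : Prop :=
  ∃ i j k : B, i ≠ j ∧ i ≠ k ∧ j ≠ k ∧
    ((cm i j = 3 ∧ cm i k = 3 ∧ cm j k = 3) ∨
     (cm i j = 4 ∧ cm j k = 4 ∧ cm i k = 2) ∨
     (cm i j = 6 ∧ cm j k = 3 ∧ cm i k = 2))
/-- abbreviation for `ξ_i = v_{s_i} - v_{s_i}^{-1}`. -/
noncomputable def xi (cs : CoxeterSystem cm W) (L : W → ℤ) (i : B) : LaurentPolynomial ℤ :=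
  (T (L (cs.simple i)) : LaurentPolynomial ℤ) - T (-(L (cs.simple i)))

/-- restatement of the recursion with `xi`. -/
theorem f_rec (D : HeckeData cs L) {y : W} {i : B}
    (h : cs.length (y * cs.simple i) = cs.length y + 1) (x z : W) :
    D.f x (y * cs.simple i) z =
      D.f x y (z * cs.simple i) +
      (if cs.length (z * cs.simple i) < cs.length z then xi cs L i * D.f x y z else 0) :=
  D.f_mul_simple x y z i h

/-- dichotomy for right multiplication by a simple reflection. -/
theorem simple_cases (cs : CoxeterSystem cm W) (z : W) (i : B) :
    (cs.length (z * cs.simple i) = cs.length z + 1 ∧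
      ¬ cs.length (z * cs.simple i) < cs.length z) ∨
    (cs.length (z * cs.simple i) < cs.length z ∧
      cs.length z = cs.length (z * cs.simple i) + 1) := by
  rcases cs.length_mul_simple z i with h | h
  · exact Or.inl ⟨h, by omega⟩
  · exact Or.inr ⟨by omega, by omega⟩

theorem not_descent_mul {z : W} {i : B}
    (h : cs.length (z * cs.simple i) < cs.length z) :
    ¬ cs.length (z * cs.simple i * cs.simple i) < cs.length (z * cs.simple i) := by
  rw [cs.simple_mul_simple_cancel_right]; omega

theorem descent_mul {z : W} {i : B}
    (h : ¬ cs.length (z * cs.simple i) < cs.length z) :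
    cs.length (z * cs.simple i * cs.simple i) < cs.length (z * cs.simple i) := by
  rw [cs.simple_mul_simple_cancel_right]
  rcases cs.length_mul_simple z i with h' | h' <;> omega

/-- right induction principle along ascents. -/
theorem right_induction (cs : CoxeterSystem cm W) {P : W → Prop} (h1 : P 1)
    (hstep : ∀ (y : W) (i : B), cs.length (y * cs.simple i) = cs.length y + 1 →
      P y → P (y * cs.simple i)) : ∀ y, P y := by
  intro y
  generalize hn : cs.length y = n
  induction n using Nat.strong_induction_on generalizing y with
  | _ n ih =>
    rcases eq_or_ne y 1 with rfl | hy
    · exact h1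
    · obtain ⟨i, hi⟩ := cs.exists_rightDescent_of_ne_one hy
      have hd : cs.length (y * cs.simple i) < cs.length y := hi
      have hup : cs.length ((y * cs.simple i) * cs.simple i) =
          cs.length (y * cs.simple i) + 1 := by
        rw [cs.simple_mul_simple_cancel_right]
        rcases cs.length_mul_simple y i with h | h <;> omega
      have hP : P (y * cs.simple i) :=
        ih (cs.length (y * cs.simple i)) (by omega) _ rfl
      have := hstep (y * cs.simple i) i hup hP
      rwa [cs.simple_mul_simple_cancel_right] at this

/-- left induction principle along ascents. -/
theorem left_induction (cs : CoxeterSystem cm W) {P : W → Prop} (h1 : P 1)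
    (hstep : ∀ (x : W) (i : B), cs.length (cs.simple i * x) = cs.length x + 1 →
      P x → P (cs.simple i * x)) : ∀ x, P x := by
  intro x
  generalize hn : cs.length x = n
  induction n using Nat.strong_induction_on generalizing x with
  | _ n ih =>
    rcases eq_or_ne x 1 with rfl | hx
    · exact h1
    · obtain ⟨i, hi⟩ := cs.exists_leftDescent_of_ne_one hx
      have hd : cs.length (cs.simple i * x) < cs.length x := hi
      have hup : cs.length (cs.simple i * (cs.simple i * x)) =
          cs.length (cs.simple i * x) + 1 := by
        rw [cs.simple_mul_simple_cancel_left]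
        rcases cs.length_simple_mul x i with h | h <;> omega
      have hP : P (cs.simple i * x) :=
        ih (cs.length (cs.simple i * x)) (by omega) _ rfl
      have := hstep (cs.simple i * x) i hup hP
      rwa [cs.simple_mul_simple_cancel_left] at this


variable {D : HeckeData cs L}

/-- the unified right multiplication rule, valid for ascents and descents. -/
theorem RC_all (D : HeckeData cs L) (x y z : W) (i : B) :
    D.f x y (z * cs.simple i) +
      (if cs.length (z * cs.simple i) < cs.length z then xi cs L i * D.f x y z else 0) =
    D.f x (y * cs.simple i) z +
      (if cs.length (y * cs.simple i) < cs.length y then xi cs L i * D.f x y z else 0) := by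
  rcases simple_cases cs y i with ⟨ha, hn⟩ | ⟨hd, hlen⟩
  · rw [f_rec D ha, if_neg hn]
    ring
  · -- descent case
    set y' := y * cs.simple i with hy'
    have hy : y' * cs.simple i = y := cs.simple_mul_simple_cancel_right i
    have ha : cs.length (y' * cs.simple i) = cs.length y' + 1 := by
      rw [hy]; omega
    have e1 : D.f x y z = D.f x y' (z * cs.simple i) +
        (if cs.length (z * cs.simple i) < cs.length z then xi cs L i * D.f x y' z else 0) := by
      conv_lhs => rw [← hy]
      exact f_rec D ha x z
    have e2 : D.f x y (z * cs.simple i) = D.f x y' (z * cs.simple i * cs.simple i) +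
        (if cs.length (z * cs.simple i * cs.simple i) < cs.length (z * cs.simple i)
          then xi cs L i * D.f x y' (z * cs.simple i) else 0) := by
      conv_lhs => rw [← hy]
      exact f_rec D ha x (z * cs.simple i)
    rw [if_pos hd, e1, e2, cs.simple_mul_simple_cancel_right]
    by_cases hc : cs.length (z * cs.simple i) < cs.length z
    · rw [if_pos hc, if_pos hc,
        if_neg (by omega : ¬ cs.length z < cs.length (z * cs.simple i))]
      ring
    · have hlt : cs.length z < cs.length (z * cs.simple i) := by
        rcases cs.length_mul_simple z i with h | h <;> omega
      rw [if_neg hc, if_neg hc, if_pos hlt]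
      ring

/-- `f 1 y z = δ_{z,y}`. -/
theorem f_one_left (D : HeckeData cs L) (y : W) : ∀ z : W,
    D.f 1 y z = if z = y then 1 else 0 := by
  induction y using right_induction cs with
  | h1 => exact fun z => D.f_one 1 z
  | hstep y i hup ih =>
    intro z
    have hcancel : ∀ w : W, w * cs.simple i * cs.simple i = w :=
      fun w => cs.simple_mul_simple_cancel_right i
    have hne : y * cs.simple i ≠ y := fun h => cs.length_mul_simple_ne y i (by rw [h])
    rw [f_rec D hup, ih, ih]
    rcases eq_or_ne z (y * cs.simple i) with rfl | hz
    · simp [hcancel, hne]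
    · have h1 : z * cs.simple i ≠ y := fun h => hz (by rw [← h, hcancel])
      by_cases hzy : z = y
      · subst hzy
        rw [if_neg h1, if_neg (by omega : ¬ cs.length (z * cs.simple i) < cs.length z),
          if_neg hz]
        ring
      · simp [h1, hz, hzy]

/-- `f_{s_i, y, z} = δ_{z, s_i y}` when `ℓ(s_i y) = ℓ(y) + 1`. -/
theorem f_simple_ascent (D : HeckeData cs L) (i : B) (y : W) :
    cs.length (cs.simple i * y) = cs.length y + 1 → ∀ z : W,
      D.f (cs.simple i) y z = if z = cs.simple i * y then 1 else 0 := by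
  induction y using right_induction cs with
  | h1 =>
    intro _ z
    rw [D.f_one]
    simp
  | hstep y j hup ih =>
    intro hiy z
    have hyle : cs.length (cs.simple i * y) = cs.length y + 1 := by
      have h1 : cs.length (cs.simple i * (y * cs.simple j)) ≤
          cs.length (cs.simple i * y) + 1 := by
        have := cs.length_mul_le (cs.simple i * y) (cs.simple j)
        rw [cs.length_simple] at this
        rwa [← mul_assoc]
      rcases cs.length_simple_mul y i with h | h <;> omega
    have hcancel : ∀ w : W, w * cs.simple j * cs.simple j = w :=
      fun w => cs.simple_mul_simple_cancel_right j
    rw [f_rec D hup, ih hyle, ih hyle]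
    have hklen : cs.length (cs.simple i * (y * cs.simple j)) =
        cs.length (cs.simple i * y) + 1 := by omega
    have hne : cs.simple i * (y * cs.simple j) ≠ cs.simple i * y := by
      intro h
      rw [h] at hklen
      omega
    rcases eq_or_ne z (cs.simple i * (y * cs.simple j)) with rfl | hz
    · have h1 : cs.simple i * (y * cs.simple j) * cs.simple j = cs.simple i * y := by
        rw [mul_assoc, hcancel]
      rw [h1]
      simp [hne]
    · have h2 : z * cs.simple j ≠ cs.simple i * y := by
        intro h
        apply hz
        rw [← mul_assoc, ← h, hcancel]
      by_cases hzy : z = cs.simple i * y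
      · subst hzy
        rw [if_neg h2, if_neg (show ¬ cs.length (cs.simple i * y * cs.simple j) <
            cs.length (cs.simple i * y) by rw [mul_assoc]; omega), if_neg hz]
        ring
      · simp [h2, hz, hzy]

theorem finsum_delta (a : W) (g : W → LaurentPolynomial ℤ) :
    ∑ᶠ u, (if u = a then g u else 0) = g a := by
  rw [finsum_eq_single _ a (by intro x hx; rw [if_neg hx])]
  rw [if_pos rfl]

theorem supp_subset_left (g h : W → LaurentPolynomial ℤ) :
    Function.support (fun z => g z * h z) ⊆ Function.support g := by
  intro z hz
  simp only [Function.mem_support] at hz ⊢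
  intro h0
  apply hz
  rw [h0, zero_mul]

/-- `f_{s_i, s_i, z} = δ_{z,1} + ξ_i δ_{z,s_i}`. -/
theorem f_simple_simple (D : HeckeData cs L) (i : B) (z : W) :
    D.f (cs.simple i) (cs.simple i) z =
      (if z = 1 then 1 else 0) + (if z = cs.simple i then xi cs L i else 0) := by
  have hs1 : cs.simple i ≠ 1 := by
    intro h
    have h2 := cs.length_simple i
    rw [h, cs.length_one] at h2
    exact absurd h2 (by omega)
  have h : cs.length ((1 : W) * cs.simple i) = cs.length (1 : W) + 1 := by
    rw [one_mul, cs.length_simple, cs.length_one]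
  have := f_rec D h (cs.simple i) z
  rw [one_mul] at this
  rw [this, D.f_one, D.f_one]
  have hzs : (z * cs.simple i = cs.simple i) ↔ z = 1 := by
    constructor
    · intro hh; exact mul_right_cancel (by rw [hh, one_mul])
    · intro hh; rw [hh, one_mul]
  rcases eq_or_ne z 1 with rfl | hz1
  · have hnl : ¬ cs.length ((1:W) * cs.simple i) < cs.length (1:W) := by
      rw [one_mul, cs.length_simple, cs.length_one]; omega
    rw [if_pos (hzs.mpr rfl), if_neg hnl, if_pos rfl, if_neg (Ne.symm hs1)]
  · rw [if_neg (fun hh => hz1 (hzs.mp hh)), if_neg hz1]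
    rcases eq_or_ne z (cs.simple i) with rfl | hzs2
    · rw [if_pos rfl, if_pos rfl]
      have : cs.length (cs.simple i * cs.simple i) < cs.length (cs.simple i) := by
        rw [cs.simple_mul_simple_self, cs.length_one, cs.length_simple]; omega
      rw [if_pos this]
      ring
    · rw [if_neg hzs2, if_neg hzs2, mul_zero]
      simp

/-- associativity instance: `T_{s_i} (T_x T_y) = (T_{s_i} T_x) T_y` in coordinates. -/
theorem assoc2 (D : HeckeData cs L) (i : B) (x : W) (y : W) : ∀ v : W,
    ∑ᶠ u, D.f (cs.simple i) x u * D.f u y v = ∑ᶠ z, D.f x y z * D.f (cs.simple i) z v := by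
  induction y using right_induction cs with
  | h1 =>
    intro v
    have l : (fun u => D.f (cs.simple i) x u * D.f u 1 v) =
        (fun u => if u = v then D.f (cs.simple i) x u else 0) := by
      funext u
      rw [D.f_one]
      rcases eq_or_ne v u with rfl | h
      · rw [if_pos rfl, if_pos rfl, mul_one]
      · rw [if_neg h, if_neg (Ne.symm h), mul_zero]
    have r : (fun z => D.f x 1 z * D.f (cs.simple i) z v) =
        (fun z => if z = x then D.f (cs.simple i) z v else 0) := by
      funext z
      rw [D.f_one]
      rcases eq_or_ne z x with rfl | h
      · rw [if_pos rfl, if_pos rfl, one_mul]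
      · rw [if_neg h, if_neg h, zero_mul]
    rw [l, r, finsum_delta, finsum_delta]
  | hstep y j hup ih =>
    intro v
    set s := cs.simple i
    set t := cs.simple j
    set S : W → LaurentPolynomial ℤ := D.f s x with hSdef
    set G : W → LaurentPolynomial ℤ := D.f x y with hGdef
    have hS : (Function.support S).Finite := D.f_finite s x
    have hG : (Function.support G).Finite := D.f_finite x y
    set c : LaurentPolynomial ℤ :=
      if cs.length (v * t) < cs.length v then xi cs L j else 0 with hcdef
    have hcancel : ∀ w : W, w * t * t = w := fun w => cs.simple_mul_simple_cancel_right j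
    calc ∑ᶠ u, S u * D.f u (y * t) v
        = ∑ᶠ u, (S u * D.f u y (v * t) + c * (S u * D.f u y v)) := by
          apply finsum_congr
          intro u
          rw [f_rec D hup u v, hcdef]
          by_cases hc : cs.length (v * t) < cs.length v
          · rw [if_pos hc, if_pos hc]; ring
          · rw [if_neg hc, if_neg hc]; ring
      _ = (∑ᶠ u, S u * D.f u y (v * t)) + ∑ᶠ u, c * (S u * D.f u y v) := by
          apply finsum_add_distrib
          · exact hS.subset (supp_subset_left _ _)
          · apply hS.subset
            intro u hu
            simp only [Function.mem_support] at hu ⊢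
            intro h0
            apply hu
            rw [h0]
            ring
      _ = (∑ᶠ z, G z * D.f s z (v * t)) + c * ∑ᶠ z, G z * D.f s z v := by
          rw [ih (v * t), ← mul_finsum _ c, ih v]
      _ = ∑ᶠ z, (G z * D.f s z (v * t) + c * (G z * D.f s z v)) := by
          rw [mul_finsum _ c]
          symm
          apply finsum_add_distrib
          · exact hG.subset (supp_subset_left _ _)
          · apply hG.subset
            intro z hz
            simp only [Function.mem_support] at hz ⊢
            intro h0
            apply hz
            rw [h0]
            ring
      _ = ∑ᶠ z, (G z * D.f s (z * t) v +
            (if cs.length (z * t) < cs.length z then xi cs L j * G z else 0) * D.f s z v) := by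
          apply finsum_congr
          intro z
          have hrc := RC_all D s z v j
          rw [hcdef]
          by_cases hc : cs.length (v * t) < cs.length v <;>
            by_cases hz2 : cs.length (z * t) < cs.length z
          · rw [if_pos hc] at hrc ⊢
            rw [if_pos hz2] at hrc ⊢
            linear_combination (G z) * hrc
          · rw [if_pos hc] at hrc ⊢
            rw [if_neg hz2] at hrc ⊢
            linear_combination (G z) * hrc
          · rw [if_neg hc] at hrc ⊢
            rw [if_pos hz2] at hrc ⊢
            linear_combination (G z) * hrc
          · rw [if_neg hc] at hrc ⊢
            rw [if_neg hz2] at hrc ⊢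
            linear_combination (G z) * hrc
      _ = (∑ᶠ z, G z * D.f s (z * t) v) +
            ∑ᶠ z, (if cs.length (z * t) < cs.length z then xi cs L j * G z else 0) * D.f s z v := by
          apply finsum_add_distrib
          · exact hG.subset (supp_subset_left _ _)
          · apply Set.Finite.subset hG
            intro z hz
            simp only [Function.mem_support] at hz ⊢
            intro h0
            apply hz
            rw [h0]
            simp
      _ = (∑ᶠ z, G (z * t) * D.f s z v) +
            ∑ᶠ z, (if cs.length (z * t) < cs.length z then xi cs L j * G z else 0) * D.f s z v := by
          congr 1
          calc ∑ᶠ z, G z * D.f s (z * t) v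
              = ∑ᶠ z, (fun w => G (w * t) * D.f s w v) ((Equiv.mulRight t) z) := by
                apply finsum_congr
                intro z
                simp only [Equiv.coe_mulRight]
                rw [hcancel]
            _ = ∑ᶠ w, G (w * t) * D.f s w v := by
                have h := finsum_comp_equiv (Equiv.mulRight t)
                  (f := fun w => G (w * t) * D.f s w v)
                simpa using h
      _ = ∑ᶠ z, (G (z * t) +
            (if cs.length (z * t) < cs.length z then xi cs L j * G z else 0)) * D.f s z v := by
          symm
          have expand : ∀ z : W, (G (z * t) +
              (if cs.length (z * t) < cs.length z then xi cs L j * G z else 0)) * D.f s z v =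
              G (z * t) * D.f s z v +
              (if cs.length (z * t) < cs.length z then xi cs L j * G z else 0) * D.f s z v := by
            intro z; rw [add_mul]
          rw [finsum_congr expand]
          apply finsum_add_distrib
          · apply Set.Finite.subset (hG.preimage (f := fun z => z * t)
              (Set.injOn_of_injective (fun a b hab => by
                have := congrArg (· * t) hab
                simpa [hcancel] using this)))
            intro z hz
            simp only [Function.mem_support, Set.mem_preimage] at hz ⊢
            intro h0
            apply hz
            rw [h0, zero_mul]
          · apply Set.Finite.subset hG
            intro z hz
            simp only [Function.mem_support] at hz ⊢
            intro h0
            apply hz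
            rw [h0]
            simp
      _ = ∑ᶠ z, D.f x (y * t) z * D.f s z v := by
          apply finsum_congr
          intro z
          congr 1
          rw [f_rec D hup x z, hGdef]

theorem supp_ite (a : W) (g : W → LaurentPolynomial ℤ) :
    Function.support (fun z => if z = a then g z else 0) ⊆ {a} := by
  intro z hz
  simp only [Function.mem_support] at hz
  simp only [Set.mem_singleton_iff]
  by_contra h
  rw [if_neg h] at hz
  exact hz rfl

theorem finsum_split (a b : W) (g h : W → LaurentPolynomial ℤ) :
    ∑ᶠ u, ((if u = a then g u else 0) + (if u = b then h u else 0)) = g a + h b := by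
  rw [finsum_add_distrib ((Set.finite_singleton a).subset (supp_ite a g))
    ((Set.finite_singleton b).subset (supp_ite b h)), finsum_delta, finsum_delta]

/-- the full formula for `f_{s_i, z, v}`. -/
theorem f_simple (D : HeckeData cs L) (i : B) (z v : W) :
    D.f (cs.simple i) z v = (if v = cs.simple i * z then 1 else 0) +
      (if cs.length (cs.simple i * z) < cs.length z
        then (if v = z then xi cs L i else 0) else 0) := by
  rcases cs.length_simple_mul z i with ha | hd
  · rw [f_simple_ascent D i z ha v, if_neg (by omega : ¬ cs.length (cs.simple i * z) < cs.length z)]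
    ring
  · have hdesc : cs.length (cs.simple i * z) < cs.length z := by omega
    set x₀ := cs.simple i * z with hx₀
    have hsx₀ : cs.simple i * x₀ = z := cs.simple_mul_simple_cancel_left i
    have ha : cs.length (cs.simple i * x₀) = cs.length x₀ + 1 := by
      rw [hsx₀]; omega
    have key := assoc2 D i (cs.simple i) x₀ v
    have lhs_eq : ∑ᶠ u, D.f (cs.simple i) (cs.simple i) u * D.f u x₀ v =
        D.f 1 x₀ v + xi cs L i * D.f (cs.simple i) x₀ v := by
      calc ∑ᶠ u, D.f (cs.simple i) (cs.simple i) u * D.f u x₀ v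
          = ∑ᶠ u, ((if u = 1 then D.f u x₀ v else 0) +
              (if u = cs.simple i then xi cs L i * D.f u x₀ v else 0)) := by
            apply finsum_congr
            intro u
            rw [f_simple_simple D i u]
            have hs1 : cs.simple i ≠ 1 := by
              intro hcon
              have hl := cs.length_simple i
              rw [hcon, cs.length_one] at hl
              omega
            by_cases h1 : u = 1 <;> by_cases h2 : u = cs.simple i
            · exact absurd (h2.symm.trans h1) hs1
            · rw [if_pos h1, if_pos h1, if_neg h2, if_neg h2]; ring
            · rw [if_neg h1, if_neg h1, if_pos h2, if_pos h2]; ring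
            · rw [if_neg h1, if_neg h1, if_neg h2, if_neg h2]; ring
        _ = D.f 1 x₀ v + xi cs L i * D.f (cs.simple i) x₀ v := finsum_split _ _ _ _
    have rhs_eq : ∑ᶠ z', D.f (cs.simple i) x₀ z' * D.f (cs.simple i) z' v =
        D.f (cs.simple i) z v := by
      calc ∑ᶠ z', D.f (cs.simple i) x₀ z' * D.f (cs.simple i) z' v
          = ∑ᶠ z', (if z' = z then D.f (cs.simple i) z' v else 0) := by
            apply finsum_congr
            intro z'
            rw [f_simple_ascent D i x₀ ha z', hsx₀]
            rcases eq_or_ne z' z with rfl | h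
            · rw [if_pos rfl, if_pos rfl, one_mul]
            · rw [if_neg h, if_neg h, zero_mul]
        _ = D.f (cs.simple i) z v := finsum_delta _ _
    rw [lhs_eq, rhs_eq] at key
    rw [← key, f_one_left, f_simple_ascent D i x₀ ha v, hsx₀, if_pos hdesc]
    rcases eq_or_ne v z with rfl | h
    · rw [if_pos rfl, if_pos rfl, mul_one]
    · rw [if_neg h, if_neg h, mul_zero]

/-- the left-multiplication recursion. -/
theorem left_rec (D : HeckeData cs L) {x : W} {i : B}
    (hx : cs.length (cs.simple i * x) = cs.length x + 1) (y v : W) :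
    D.f (cs.simple i * x) y v = D.f x y (cs.simple i * v) +
      (if cs.length (cs.simple i * v) < cs.length v then xi cs L i * D.f x y v else 0) := by
  have key := assoc2 D i x y v
  have lhs_eq : ∑ᶠ u, D.f (cs.simple i) x u * D.f u y v = D.f (cs.simple i * x) y v := by
    calc ∑ᶠ u, D.f (cs.simple i) x u * D.f u y v
        = ∑ᶠ u, (if u = cs.simple i * x then D.f u y v else 0) := by
          apply finsum_congr
          intro u
          rw [f_simple_ascent D i x hx u]
          rcases eq_or_ne u (cs.simple i * x) with rfl | h
          · rw [if_pos rfl, if_pos rfl, one_mul]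
          · rw [if_neg h, if_neg h, zero_mul]
      _ = D.f (cs.simple i * x) y v := finsum_delta _ _
  have rhs_eq : ∑ᶠ z, D.f x y z * D.f (cs.simple i) z v =
      D.f x y (cs.simple i * v) +
        (if cs.length (cs.simple i * v) < cs.length v then xi cs L i * D.f x y v else 0) := by
    calc ∑ᶠ z, D.f x y z * D.f (cs.simple i) z v
        = ∑ᶠ z, ((if z = cs.simple i * v then D.f x y z else 0) +
            (if z = v then (if cs.length (cs.simple i * v) < cs.length v
              then xi cs L i * D.f x y v else 0) else 0)) := by
          apply finsum_congr
          intro z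
          rw [f_simple D i z v, mul_add]
          congr 1
          · have hcond : (v = cs.simple i * z) ↔ (z = cs.simple i * v) := by
              constructor
              · intro h; rw [h, cs.simple_mul_simple_cancel_left]
              · intro h; rw [h, cs.simple_mul_simple_cancel_left]
            rcases eq_or_ne z (cs.simple i * v) with rfl | h
            · rw [if_pos (hcond.mpr rfl), if_pos rfl, mul_one]
            · rw [if_neg (fun hh => h (hcond.mp hh)), if_neg h, mul_zero]
          · rcases eq_or_ne z v with rfl | h
            · rw [if_pos rfl]
              by_cases hc : cs.length (cs.simple i * z) < cs.length z
              · rw [if_pos hc, if_pos hc, if_pos rfl]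
                ring
              · rw [if_neg hc, if_neg hc, mul_zero]
                simp
            · rw [if_neg h]
              by_cases hc : cs.length (cs.simple i * z) < cs.length z
              · rw [if_pos hc, if_neg (Ne.symm h), mul_zero]
              · rw [if_neg hc, mul_zero]
      _ = _ := by
          rw [finsum_split]
  rw [lhs_eq, rhs_eq] at key
  exact key

/-! ### Degree estimates -/

theorem degree_add_le' (f g : LaurentPolynomial ℤ) {a : WithBot ℤ}
    (hf : f.degree ≤ a) (hg : g.degree ≤ a) : (f + g).degree ≤ a := by
  have h : (f + g).degree ≤ max f.degree g.degree := by
    unfold LaurentPolynomial.degree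
    calc (f + g).coeff.support.max ≤ (f.coeff.support ∪ g.coeff.support).max :=
          Finset.max_mono (show (f.coeff + g.coeff).support ⊆ _ from Finsupp.support_add)
      _ = _ := Finset.max_union
  exact h.trans (max_le hf hg)

theorem degree_mul_le' (f g : LaurentPolynomial ℤ) :
    (f * g).degree ≤ f.degree + g.degree := by
  unfold LaurentPolynomial.degree
  refine le_trans (Finset.max_mono (AddMonoidAlgebra.support_coeff_mul_subset f g)) ?_
  apply Finset.max_le
  intro a ha
  rw [Finset.mem_add] at ha
  obtain ⟨b, hb, c, hc, rfl⟩ := ha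
  calc ((b + c : ℤ) : WithBot ℤ) = (b : WithBot ℤ) + c := by push_cast; ring
    _ ≤ _ := add_le_add (Finset.le_max hb) (Finset.le_max hc)

theorem degree_neg' (f : LaurentPolynomial ℤ) : (-f).degree = f.degree := by
  unfold LaurentPolynomial.degree
  show (-f.coeff).support.max = _
  rw [Finsupp.support_neg]

theorem degree_one_le : (1 : LaurentPolynomial ℤ).degree ≤ (0 : ℤ) := by
  rw [← T_zero]
  exact degree_T_le 0

theorem degree_delta_le (P : Prop) :
    (if P then (1 : LaurentPolynomial ℤ) else 0).degree ≤ ((0 : ℤ) : WithBot ℤ) := by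
  by_cases h : P
  · rw [if_pos h]; exact degree_one_le
  · rw [if_neg h, LaurentPolynomial.degree_zero]; exact bot_le

theorem degree_xi (hL : IsWeightFunction cs L) (i : B) :
    (xi cs L i).degree ≤ ((L (cs.simple i) : ℤ) : WithBot ℤ) := by
  unfold xi
  rw [sub_eq_add_neg]
  apply degree_add_le'
  · exact degree_T_le _
  · rw [degree_neg']
    refine le_trans (degree_T_le _) ?_
    rw [WithBot.coe_le_coe]
    have := hL.2 i
    omega

theorem L_one (hL : IsWeightFunction cs L) : L 1 = 0 := by
  have := hL.1 1 1 (by rw [one_mul, cs.length_one])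
  rw [one_mul] at this
  omega

theorem L_mul_right (hL : IsWeightFunction cs L) {y : W} {i : B}
    (h : cs.length (y * cs.simple i) = cs.length y + 1) :
    L (y * cs.simple i) = L y + L (cs.simple i) :=
  hL.1 y (cs.simple i) (by rw [cs.length_simple]; exact h)

theorem L_mul_left (hL : IsWeightFunction cs L) {x : W} {i : B}
    (h : cs.length (cs.simple i * x) = cs.length x + 1) :
    L (cs.simple i * x) = L (cs.simple i) + L x :=
  hL.1 (cs.simple i) x (by rw [cs.length_simple]; omega)

theorem L_nonneg (hL : IsWeightFunction cs L) : ∀ w : W, 0 ≤ L w := by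
  refine right_induction cs (P := fun w => 0 ≤ L w) ?_ ?_
  · show 0 ≤ L 1
    rw [L_one hL]
  · intro y i h hy
    show 0 ≤ L (y * cs.simple i)
    rw [L_mul_right hL h]
    have := hL.2 i
    omega

/-- descent case: `L z = L (z s_i) + L s_i`. -/
theorem L_desc_right (hL : IsWeightFunction cs L) {z : W} {i : B}
    (h : cs.length (z * cs.simple i) < cs.length z) :
    L z = L (z * cs.simple i) + L (cs.simple i) := by
  have hup : cs.length ((z * cs.simple i) * cs.simple i) =
      cs.length (z * cs.simple i) + 1 := by
    rw [cs.simple_mul_simple_cancel_right]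
    rcases cs.length_mul_simple z i with h' | h' <;> omega
  have := L_mul_right hL hup
  rwa [cs.simple_mul_simple_cancel_right] at this

theorem L_desc_left (hL : IsWeightFunction cs L) {z : W} {i : B}
    (h : cs.length (cs.simple i * z) < cs.length z) :
    L z = L (cs.simple i) + L (cs.simple i * z) := by
  have hup : cs.length (cs.simple i * (cs.simple i * z)) =
      cs.length (cs.simple i * z) + 1 := by
    rw [cs.simple_mul_simple_cancel_left]
    rcases cs.length_simple_mul z i with h' | h' <;> omega
  have := L_mul_left hL hup
  rwa [cs.simple_mul_simple_cancel_left] at this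

/-- `deg f_{x,y,z} ≤ L y`. -/
theorem deg_le_y (hL : IsWeightFunction cs L) (D : HeckeData cs L) (y : W) :
    ∀ x z : W, (D.f x y z).degree ≤ ((L y : ℤ) : WithBot ℤ) := by
  induction y using right_induction cs with
  | h1 =>
    intro x z
    rw [D.f_one, L_one hL]
    exact degree_delta_le _
  | hstep y i h ih =>
    intro x z
    rw [f_rec D h, L_mul_right hL h]
    have hLi := hL.2 i
    apply degree_add_le'
    · refine le_trans (ih x (z * cs.simple i)) ?_
      rw [WithBot.coe_le_coe]; omega
    · by_cases hc : cs.length (z * cs.simple i) < cs.length z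
      · rw [if_pos hc]
        refine le_trans (degree_mul_le' _ _) ?_
        calc (xi cs L i).degree + (D.f x y z).degree ≤
            ((L (cs.simple i) : ℤ) : WithBot ℤ) + ((L y : ℤ) : WithBot ℤ) :=
              add_le_add (degree_xi hL i) (ih x z)
          _ ≤ _ := by
              rw [← WithBot.coe_add]
              try exact WithBot.coe_le_coe.mpr (by omega)
      · rw [if_neg hc, LaurentPolynomial.degree_zero]; exact bot_le

/-- `deg f_{x,y,z} ≤ L y + L z - L x`. -/
theorem deg_le_yzx (hL : IsWeightFunction cs L) (D : HeckeData cs L) (y : W) :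
    ∀ x z : W, (D.f x y z).degree ≤ ((L y + L z - L x : ℤ) : WithBot ℤ) := by
  induction y using right_induction cs with
  | h1 =>
    intro x z
    rw [D.f_one, L_one hL]
    rcases eq_or_ne z x with rfl | h
    · rw [if_pos rfl]
      refine le_trans degree_one_le ?_
      rw [WithBot.coe_le_coe]; omega
    · rw [if_neg h, LaurentPolynomial.degree_zero]; exact bot_le
  | hstep y i h ih =>
    intro x z
    rw [f_rec D h, L_mul_right hL h]
    have hLi := hL.2 i
    apply degree_add_le'
    · refine le_trans (ih x (z * cs.simple i)) ?_
      rw [WithBot.coe_le_coe]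
      rcases cs.length_mul_simple z i with hup | hdn
      · rw [L_mul_right hL hup]; omega
      · have := L_desc_right hL (show cs.length (z * cs.simple i) < cs.length z by omega)
        omega
    · by_cases hc : cs.length (z * cs.simple i) < cs.length z
      · rw [if_pos hc]
        refine le_trans (degree_mul_le' _ _) ?_
        calc (xi cs L i).degree + (D.f x y z).degree ≤
            ((L (cs.simple i) : ℤ) : WithBot ℤ) + ((L y + L z - L x : ℤ) : WithBot ℤ) :=
              add_le_add (degree_xi hL i) (ih x z)
          _ ≤ _ := by
              rw [← WithBot.coe_add]
              try exact WithBot.coe_le_coe.mpr (by omega)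
      · rw [if_neg hc, LaurentPolynomial.degree_zero]; exact bot_le

/-- `deg f_{x,y,z} ≤ L x`. -/
theorem deg_le_x (hL : IsWeightFunction cs L) (D : HeckeData cs L) (x : W) :
    ∀ y z : W, (D.f x y z).degree ≤ ((L x : ℤ) : WithBot ℤ) := by
  induction x using left_induction cs with
  | h1 =>
    intro y z
    rw [f_one_left, L_one hL]
    exact degree_delta_le _
  | hstep x i h ih =>
    intro y z
    rw [left_rec D h, L_mul_left hL h]
    have hLi := hL.2 i
    apply degree_add_le'
    · refine le_trans (ih y (cs.simple i * z)) ?_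
      rw [WithBot.coe_le_coe]; omega
    · by_cases hc : cs.length (cs.simple i * z) < cs.length z
      · rw [if_pos hc]
        refine le_trans (degree_mul_le' _ _) ?_
        calc (xi cs L i).degree + (D.f x y z).degree ≤
            ((L (cs.simple i) : ℤ) : WithBot ℤ) + ((L x : ℤ) : WithBot ℤ) :=
              add_le_add (degree_xi hL i) (ih y z)
          _ ≤ _ := by
              rw [← WithBot.coe_add]
              try exact WithBot.coe_le_coe.mpr (by omega)
      · rw [if_neg hc, LaurentPolynomial.degree_zero]; exact bot_le

/-- `deg f_{x,y,z} ≤ L x + L z - L y`. -/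
theorem deg_le_xzy (hL : IsWeightFunction cs L) (D : HeckeData cs L) (x : W) :
    ∀ y z : W, (D.f x y z).degree ≤ ((L x + L z - L y : ℤ) : WithBot ℤ) := by
  induction x using left_induction cs with
  | h1 =>
    intro y z
    rw [f_one_left, L_one hL]
    rcases eq_or_ne z y with rfl | h
    · rw [if_pos rfl]
      refine le_trans degree_one_le ?_
      rw [WithBot.coe_le_coe]; omega
    · rw [if_neg h, LaurentPolynomial.degree_zero]; exact bot_le
  | hstep x i h ih =>
    intro y z
    rw [left_rec D h, L_mul_left hL h]
    have hLi := hL.2 i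
    apply degree_add_le'
    · refine le_trans (ih y (cs.simple i * z)) ?_
      rw [WithBot.coe_le_coe]
      rcases cs.length_simple_mul z i with hup | hdn
      · rw [L_mul_left hL hup]; omega
      · have := L_desc_left hL (show cs.length (cs.simple i * z) < cs.length z by omega)
        omega
    · by_cases hc : cs.length (cs.simple i * z) < cs.length z
      · rw [if_pos hc]
        refine le_trans (degree_mul_le' _ _) ?_
        calc (xi cs L i).degree + (D.f x y z).degree ≤
            ((L (cs.simple i) : ℤ) : WithBot ℤ) + ((L x + L z - L y : ℤ) : WithBot ℤ) :=
              add_le_add (degree_xi hL i) (ih y z)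
          _ ≤ _ := by
              rw [← WithBot.coe_add]
              try exact WithBot.coe_le_coe.mpr (by omega)
      · rw [if_neg hc, LaurentPolynomial.degree_zero]; exact bot_le

theorem stmt1' (hL : IsWeightFunction cs L) (D : HeckeData cs L) (x y z : W) :
    (D.f x y z).degree ≤ ((min (L x) (min (L y) (L z)) : ℤ) : WithBot ℤ) := by
  have hx := deg_le_x hL D x y z
  have hy := deg_le_y hL D y x z
  have hz : (D.f x y z).degree ≤ ((L z : ℤ) : WithBot ℤ) := by
    rcases le_total (L x) (L y) with hxy | hxy
    · refine le_trans (deg_le_xzy hL D x y z) ?_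
      rw [WithBot.coe_le_coe]; omega
    · refine le_trans (deg_le_yzx hL D y x z) ?_
      rw [WithBot.coe_le_coe]; omega
  rcases min_cases (L x) (min (L y) (L z)) with ⟨h1, _⟩ | ⟨h1, _⟩
  · rw [h1]; exact hx
  · rw [h1]
    rcases min_cases (L y) (L z) with ⟨h2, _⟩ | ⟨h2, _⟩
    · rw [h2]; exact hy
    · rw [h2]; exact hz

/-- `deg f_{x,y,z} ≤ min {L x, L y, L z}`. -/
theorem stmt1 (cs : CoxeterSystem cm W) (L : W → ℤ) (hL : IsWeightFunction cs L)
    (D : HeckeData cs L) (x y z : W) :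
    (D.f x y z).degree ≤ ((min (L x) (min (L y) (L z)) : ℤ) : WithBot ℤ) := by
  exact stmt1' hL D x y z

end Weighted
end

section
/- Let (W,S,L) be a weighted Coxeter group of rank 3 and x ∈ P_{J,J'} with J' = {r_1, r_2}, r_1 ≠ r_2, and write x = x_1·w_{J'} (reduced) with x_1 ∈ B_{J'}. If the left descent set of x_1 is not equal to J, then the left descent set of x_1 r_1 is not equal to J or the left descent set of x_1 r_2 is not equal to J. -/
open LaurentPolynomial
open scoped Classical

namespace Weighted

variable {B W : Type} [Group W] {cm : CoxeterMatrix B}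

variable {cs : CoxeterSystem cm W} {L : W → ℤ}

section StrongExchange

open CoxeterSystem List

/-- sign of `w` relative to a list: `-1` iff `w` appears an odd number of times -/
noncomputable def wsgn (w : W) (L : List W) : ℤˣ :=
  (L.map (fun t => if w = t then (-1 : ℤˣ) else 1)).prod

lemma wsgn_nil (w : W) : wsgn w ([] : List W) = 1 := rfl

lemma wsgn_cons (w t : W) (L : List W) :
    wsgn w (t :: L) = (if w = t then (-1 : ℤˣ) else 1) * wsgn w L := by
  simp [wsgn]

lemma wsgn_append (w : W) (L₁ L₂ : List W) :
    wsgn w (L₁ ++ L₂) = wsgn w L₁ * wsgn w L₂ := by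
  simp [wsgn]

lemma wsgn_not_mem (w : W) (L : List W) (h : w ∉ L) : wsgn w L = 1 := by
  induction L with
  | nil => rfl
  | cons t L ih =>
    rw [wsgn_cons, if_neg (by simp at h; exact h.1), one_mul]
    exact ih (by simp at h; exact h.2)

lemma wsgn_self_append (w : W) (L : List W) : wsgn w (L ++ L) = 1 := by
  rw [wsgn_append]
  exact Int.units_mul_self _

/-- the sign-flipping function of the reflection representation -/
noncomputable def sflip (cs : CoxeterSystem cm W) (i : B) : W × ℤˣ → W × ℤˣ :=
  fun p => (cs.simple i * p.1 * cs.simple i, if p.1 = cs.simple i then -p.2 else p.2)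

lemma sflip_invol (cs : CoxeterSystem cm W) (i : B) (p : W × ℤˣ) :
    sflip cs i (sflip cs i p) = p := by
  obtain ⟨w, e⟩ := p
  by_cases h : w = cs.simple i
  · subst h
    simp [sflip]
  · have h2 : cs.simple i * w * cs.simple i ≠ cs.simple i := by
      intro hc
      apply h
      have := congrArg (fun z => cs.simple i * z * cs.simple i) hc
      simp only [mul_assoc, cs.simple_mul_simple_cancel_left] at this
      simpa [← mul_assoc, cs.simple_mul_simple_cancel_right,
        cs.simple_mul_simple_cancel_left] using this
    simp only [sflip, if_neg h, if_neg h2]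
    rw [Prod.mk.injEq]
    refine ⟨?_, rfl⟩
    rw [← mul_assoc, ← mul_assoc]
    simp [mul_assoc, cs.simple_mul_simple_cancel_left, cs.simple_mul_simple_cancel_right]


/-- the simple reflections acting on `W × ℤˣ` -/
noncomputable def sperm (cs : CoxeterSystem cm W) (i : B) : Equiv.Perm (W × ℤˣ) :=
  ⟨sflip cs i, sflip cs i, fun p => sflip_invol cs i p, fun p => sflip_invol cs i p⟩

lemma sperm_apply (cs : CoxeterSystem cm W) (i : B) (w : W) (e : ℤˣ) :
    sperm cs i (w, e) = (cs.simple i * w * cs.simple i,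
      if w = cs.simple i then -e else e) := rfl

lemma ris_cons (cs : CoxeterSystem cm W) (i : B) (l : List B) :
    cs.rightInvSeq (i :: l) =
      ((cs.wordProd l)⁻¹ * cs.simple i * cs.wordProd l) :: cs.rightInvSeq l := rfl


lemma prod_sperm_apply (cs : CoxeterSystem cm W) (l : List B) (w : W) (e : ℤˣ) :
    ((l.map (sperm cs)).prod) (w, e) =
      (cs.wordProd l * w * (cs.wordProd l)⁻¹, wsgn w (cs.rightInvSeq l) * e) := by
  induction l with
  | nil => simp [wsgn]
  | cons i t ih =>
    rw [map_cons, prod_cons, Equiv.Perm.mul_apply, ih, sperm_apply, ris_cons, wsgn_cons]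
    rw [Prod.mk.injEq]
    constructor
    · rw [wordProd_cons, mul_inv_rev, cs.inv_simple]
      group
    · have hcond : (cs.wordProd t * w * (cs.wordProd t)⁻¹ = cs.simple i) ↔
          (w = (cs.wordProd t)⁻¹ * cs.simple i * cs.wordProd t) := by
        constructor
        · intro h; rw [← h]; group
        · intro h; rw [h]; group
      by_cases hc : w = (cs.wordProd t)⁻¹ * cs.simple i * cs.wordProd t
      · rw [if_pos (hcond.mpr hc), if_pos hc, neg_mul, one_mul, neg_mul]
      · rw [if_neg (fun hh => hc (hcond.mp hh)), if_neg hc, one_mul]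

/-- decomposition of alternating words -/
lemma alt_add (i j : B) (a b : ℕ) :
    CoxeterSystem.alternatingWord i j (a + b) =
      CoxeterSystem.alternatingWord (if Even b then i else j) (if Even b then j else i) a
        ++ CoxeterSystem.alternatingWord i j b := by
  induction a with
  | zero => simp [CoxeterSystem.alternatingWord]
  | succ a ih =>
    have h1 : a + 1 + b = (a + b) + 1 := by omega
    rw [h1, CoxeterSystem.alternatingWord_succ', ih, CoxeterSystem.alternatingWord_succ']
    rw [← List.cons_append]
    congr 1
    by_cases ha : Even a <;> by_cases hb : Even b <;>
      simp [ha, hb, Nat.even_add, if_pos, if_neg]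

lemma ris_append (cs : CoxeterSystem cm W) (l₁ l₂ : List B) :
    cs.rightInvSeq (l₁ ++ l₂) =
      (cs.rightInvSeq l₁).map (fun t => (cs.wordProd l₂)⁻¹ * t * cs.wordProd l₂)
        ++ cs.rightInvSeq l₂ := by
  induction l₁ with
  | nil => simp
  | cons i t ih =>
    rw [List.cons_append, ris_cons, ris_cons, ih, List.map_cons, List.cons_append]
    congr 1
    rw [cs.wordProd_append, mul_inv_rev]
    group

lemma ris_alt (cs : CoxeterSystem cm W) (i j : B) (m : ℕ) :
    cs.rightInvSeq (CoxeterSystem.alternatingWord i j m) =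
      (List.range m).map (fun k =>
        (cs.wordProd (CoxeterSystem.alternatingWord i j (m - 1 - k)))⁻¹ *
          cs.wordProd (CoxeterSystem.alternatingWord i j (m - k))) := by
  induction m with
  | zero => simp [CoxeterSystem.alternatingWord]
  | succ n ih =>
    rw [CoxeterSystem.alternatingWord_succ', ris_cons, ih, List.range_succ_eq_map,
      List.map_cons, List.map_map]
    congr 1
    · have hh : cs.simple (if Even n then j else i) *
          cs.wordProd (CoxeterSystem.alternatingWord i j n) =
          cs.wordProd (CoxeterSystem.alternatingWord i j (n + 1)) := by
        rw [CoxeterSystem.alternatingWord_succ', cs.wordProd_cons]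
      simp only [Nat.add_sub_cancel, Nat.sub_zero]
      rw [← hh, mul_assoc]
    · apply List.map_congr_left
      intro k _
      simp only [Function.comp_apply]
      have e1 : n + 1 - 1 - (k + 1) = n - 1 - k := by omega
      have e2 : n + 1 - (k + 1) = n - k := by omega
      rw [e1, e2]

section KeyComm

variable (cs : CoxeterSystem cm W)

lemma conj_pow_simple (j : B) (x : W) (k : ℕ) :
    cs.simple j * x ^ k * cs.simple j = (cs.simple j * x * cs.simple j) ^ k := by
  induction k with
  | zero => simp [cs.simple_mul_simple_self]
  | succ n ihn =>
    rw [pow_succ', pow_succ', ← ihn]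
    have : cs.simple j * (x * x ^ n) * cs.simple j
        = (cs.simple j * x * cs.simple j) * (cs.simple j * x ^ n * cs.simple j) := by
      simp [mul_assoc, cs.simple_mul_simple_cancel_left]
    simpa [mul_assoc] using this

lemma brb (i j : B) (k : ℕ) :
    cs.simple j * (cs.simple i * cs.simple j) ^ k * cs.simple j
      = ((cs.simple i * cs.simple j) ^ k)⁻¹ := by
  rw [conj_pow_simple]
  have h1 : cs.simple j * (cs.simple i * cs.simple j) * cs.simple j
      = (cs.simple i * cs.simple j)⁻¹ := by
    rw [mul_inv_rev, cs.inv_simple, cs.inv_simple]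
    simp [mul_assoc, cs.simple_mul_simple_cancel_right]
  rw [h1, inv_pow]

lemma brb' (i j : B) (k : ℕ) :
    cs.simple j * (cs.simple i * cs.simple j) ^ k
      = ((cs.simple i * cs.simple j) ^ k)⁻¹ * cs.simple j := by
  have := brb cs i j k
  calc cs.simple j * (cs.simple i * cs.simple j) ^ k
      = (cs.simple j * (cs.simple i * cs.simple j) ^ k * cs.simple j) * cs.simple j := by
        rw [mul_assoc, cs.simple_mul_simple_self, mul_one]
    _ = ((cs.simple i * cs.simple j) ^ k)⁻¹ * cs.simple j := by rw [this]

lemma ba_pow (i j : B) (k : ℕ) :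
    (cs.simple j * cs.simple i) ^ k = ((cs.simple i * cs.simple j) ^ k)⁻¹ := by
  rw [← inv_pow, mul_inv_rev, cs.inv_simple, cs.inv_simple]

/-- the key commutation identity, requiring only `(s i * s j) ^ m = 1` -/
lemma key_comm (i j : B) (m : ℕ) (hrel : (cs.simple i * cs.simple j) ^ m = 1) (d : ℕ) :
    cs.wordProd (CoxeterSystem.alternatingWord (if Even m then i else j)
        (if Even m then j else i) d) * cs.wordProd (CoxeterSystem.alternatingWord i j m)
      = cs.wordProd (CoxeterSystem.alternatingWord i j m) *
          cs.wordProd (CoxeterSystem.alternatingWord i j d) := by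
  set a := cs.simple i with ha
  set b := cs.simple j with hb
  have e2 : cs.wordProd (CoxeterSystem.alternatingWord i j m)
      = (if Even m then 1 else b) * (a * b) ^ (m / 2) := cs.prod_alternatingWord_eq_mul_pow i j m
  have e3 : cs.wordProd (CoxeterSystem.alternatingWord i j d)
      = (if Even d then 1 else b) * (a * b) ^ (d / 2) := cs.prod_alternatingWord_eq_mul_pow i j d
  have binv : ∀ k : ℕ, ((a * b) ^ k)⁻¹ * b = b * (a * b) ^ k := fun k => (brb' cs i j k).symm
  have bfwd : ∀ k : ℕ, b * (a * b) ^ k = ((a * b) ^ k)⁻¹ * b := fun k => brb' cs i j k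
  rcases Nat.even_or_odd m with hm | hm
  · -- m even
    rw [if_pos hm, if_pos hm]
    rw [if_pos hm, one_mul] at e2
    rw [e2, e3]
    have hhalf : (a * b) ^ (m / 2) * (a * b) ^ (m / 2) = 1 := by
      rw [← pow_add]
      have hfix : m / 2 + m / 2 = m := by
        obtain ⟨k, hk⟩ := hm; omega
      rw [hfix, hrel]
    have hbY : b * (a * b) ^ (m / 2) = (a * b) ^ (m / 2) * b := by
      rw [bfwd, (eq_inv_of_mul_eq_one_left hhalf).symm]
    rcases Nat.even_or_odd d with hd | hd
    · simp only [if_pos hd, one_mul]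
      rw [← pow_add, ← pow_add, Nat.add_comm]
    · simp only [if_neg (Nat.not_even_iff_odd.mpr hd)]
      calc b * (a * b) ^ (d / 2) * (a * b) ^ (m / 2)
          = b * (a * b) ^ (d / 2 + m / 2) := by rw [mul_assoc, ← pow_add]
        _ = b * (a * b) ^ (m / 2 + d / 2) := by rw [Nat.add_comm]
        _ = b * ((a * b) ^ (m / 2) * (a * b) ^ (d / 2)) := by rw [pow_add]
        _ = (b * (a * b) ^ (m / 2)) * (a * b) ^ (d / 2) := by rw [mul_assoc]
        _ = (a * b) ^ (m / 2) * (b * (a * b) ^ (d / 2)) := by rw [hbY, mul_assoc]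
  · -- m odd
    have hm' : ¬ Even m := Nat.not_even_iff_odd.mpr hm
    rw [if_neg hm', if_neg hm']
    have e1 : cs.wordProd (CoxeterSystem.alternatingWord j i d)
        = (if Even d then 1 else a) * (b * a) ^ (d / 2) := cs.prod_alternatingWord_eq_mul_pow j i d
    rw [if_neg hm'] at e2
    rw [e1, e2, e3]
    have hba : (b * a) ^ (d / 2) = ((a * b) ^ (d / 2))⁻¹ := ba_pow cs i j (d / 2)
    rcases Nat.even_or_odd d with hd | hd
    · simp only [if_pos hd, one_mul]
      rw [hba]
      calc ((a * b) ^ (d / 2))⁻¹ * (b * (a * b) ^ (m / 2))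
          = (((a * b) ^ (d / 2))⁻¹ * b) * (a * b) ^ (m / 2) := by rw [mul_assoc]
        _ = (b * (a * b) ^ (d / 2)) * (a * b) ^ (m / 2) := by rw [binv]
        _ = b * (a * b) ^ (d / 2 + m / 2) := by rw [mul_assoc, ← pow_add]
        _ = b * (a * b) ^ (m / 2 + d / 2) := by rw [Nat.add_comm]
        _ = b * (a * b) ^ (m / 2) * (a * b) ^ (d / 2) := by rw [pow_add, mul_assoc]
    · have hd' : ¬ Even d := Nat.not_even_iff_odd.mpr hd
      simp only [if_neg hd']
      rw [hba]
      have hY : b * (a * b) ^ (m / 2) * (b * (a * b) ^ (d / 2))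
          = ((a * b) ^ (m / 2))⁻¹ * (a * b) ^ (d / 2) := by
        calc b * (a * b) ^ (m / 2) * (b * (a * b) ^ (d / 2))
            = (b * (a * b) ^ (m / 2) * b) * (a * b) ^ (d / 2) := by
              rw [mul_assoc, mul_assoc, mul_assoc]
          _ = ((a * b) ^ (m / 2))⁻¹ * (a * b) ^ (d / 2) := by rw [brb cs i j]
      have hX : a * ((a * b) ^ (d / 2))⁻¹ * (b * (a * b) ^ (m / 2))
          = (a * b) ^ (1 + d / 2 + m / 2) := by
        calc a * ((a * b) ^ (d / 2))⁻¹ * (b * (a * b) ^ (m / 2))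
            = a * ((((a * b) ^ (d / 2))⁻¹ * b) * (a * b) ^ (m / 2)) := by
              rw [mul_assoc, mul_assoc]
          _ = a * ((b * (a * b) ^ (d / 2)) * (a * b) ^ (m / 2)) := by rw [binv]
          _ = (a * b) * ((a * b) ^ (d / 2) * (a * b) ^ (m / 2)) := by
              rw [mul_assoc, ← mul_assoc a b]
          _ = (a * b) ^ 1 * (a * b) ^ (d / 2 + m / 2) := by rw [pow_one, pow_add]
          _ = (a * b) ^ (1 + (d / 2 + m / 2)) := by rw [← pow_add]
          _ = (a * b) ^ (1 + d / 2 + m / 2) := by rw [Nat.add_assoc]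
      rw [hX, hY]
      have hkey : (a * b) ^ (m / 2) * (a * b) ^ (1 + d / 2 + m / 2) = (a * b) ^ (d / 2) := by
        rw [← pow_add]
        have hfix : m / 2 + (1 + d / 2 + m / 2) = m + d / 2 := by
          obtain ⟨k, hk⟩ := hm; omega
        rw [hfix, pow_add, hrel, one_mul]
      rw [eq_inv_mul_iff_mul_eq, hkey]

end KeyComm

section Lift
variable (cs : CoxeterSystem cm W)

lemma pow_eq_prod_alt (i j : B) (m : ℕ) :
    (sperm cs i * sperm cs j) ^ m
      = ((CoxeterSystem.alternatingWord i j (2 * m)).map (sperm cs)).prod := by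
  induction m with
  | zero => simp [CoxeterSystem.alternatingWord]
  | succ n ih =>
    have h1 : 2 * (n + 1) = (2 * n + 1) + 1 := by omega
    rw [h1, CoxeterSystem.alternatingWord_succ', CoxeterSystem.alternatingWord_succ']
    have h2 : ¬ Even (2 * n + 1) := by simp [Nat.even_add_one]
    have h3 : Even (2 * n) := even_two_mul n
    rw [if_neg h2, if_pos h3, List.map_cons, List.map_cons, List.prod_cons, List.prod_cons,
      ← ih, ← mul_assoc, pow_succ']

lemma map_conj_ris_alt (i j : B) (m : ℕ) (hrel : (cs.simple i * cs.simple j) ^ m = 1) :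
    (cs.rightInvSeq (CoxeterSystem.alternatingWord (if Even m then i else j)
        (if Even m then j else i) m)).map
      (fun t => (cs.wordProd (CoxeterSystem.alternatingWord i j m))⁻¹ * t *
        cs.wordProd (CoxeterSystem.alternatingWord i j m))
      = cs.rightInvSeq (CoxeterSystem.alternatingWord i j m) := by
  rcases Nat.even_or_odd m with hm | hm
  · rw [if_pos hm, if_pos hm, ris_alt, List.map_map]
    apply List.map_congr_left
    intro k hk
    simp only [Function.comp_apply]
    have k1 := key_comm cs i j m hrel (m - 1 - k)
    have k2 := key_comm cs i j m hrel (m - k)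
    rw [if_pos hm, if_pos hm] at k1 k2
    set u := cs.wordProd (CoxeterSystem.alternatingWord i j m)
    set v1 := cs.wordProd (CoxeterSystem.alternatingWord i j (m - 1 - k))
    set v2 := cs.wordProd (CoxeterSystem.alternatingWord i j (m - k))
    -- k1 : v1 * u = u * v1 ; k2 : v2 * u = u * v2
    calc u⁻¹ * (v1⁻¹ * v2) * u = u⁻¹ * v1⁻¹ * (v2 * u) := by group
      _ = u⁻¹ * v1⁻¹ * (u * v2) := by rw [k2]
      _ = (v1 * u)⁻¹ * u * v2 := by group
      _ = (u * v1)⁻¹ * u * v2 := by rw [k1]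
      _ = v1⁻¹ * v2 := by group
  · have hm' : ¬ Even m := Nat.not_even_iff_odd.mpr hm
    rw [if_neg hm', if_neg hm', ris_alt, ris_alt, List.map_map]
    apply List.map_congr_left
    intro k hk
    simp only [Function.comp_apply]
    have k1 := key_comm cs i j m hrel (m - 1 - k)
    have k2 := key_comm cs i j m hrel (m - k)
    rw [if_neg hm', if_neg hm'] at k1 k2
    set u := cs.wordProd (CoxeterSystem.alternatingWord i j m)
    set w1 := cs.wordProd (CoxeterSystem.alternatingWord j i (m - 1 - k))
    set w2 := cs.wordProd (CoxeterSystem.alternatingWord j i (m - k))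
    set v1 := cs.wordProd (CoxeterSystem.alternatingWord i j (m - 1 - k))
    set v2 := cs.wordProd (CoxeterSystem.alternatingWord i j (m - k))
    calc u⁻¹ * (w1⁻¹ * w2) * u = u⁻¹ * w1⁻¹ * (w2 * u) := by group
      _ = u⁻¹ * w1⁻¹ * (u * v2) := by rw [k2]
      _ = (w1 * u)⁻¹ * u * v2 := by group
      _ = (u * v1)⁻¹ * u * v2 := by rw [k1]
      _ = v1⁻¹ * v2 := by group

theorem sperm_liftable : cm.IsLiftable (fun i => sperm cs i) := by
  intro i j
  rw [pow_eq_prod_alt]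
  apply Equiv.ext
  rintro ⟨w, e⟩
  rw [prod_sperm_apply]
  have hrel : (cs.simple i * cs.simple j) ^ cm i j = 1 := cs.simple_mul_simple_pow i j
  have hπ : cs.wordProd (CoxeterSystem.alternatingWord i j (2 * cm i j)) = 1 := by
    rw [cs.prod_alternatingWord_eq_mul_pow, if_pos (even_two_mul _), one_mul]
    have : 2 * cm i j / 2 = cm i j := by omega
    rw [this, hrel]
  have hsplit : CoxeterSystem.alternatingWord i j (2 * cm i j)
      = CoxeterSystem.alternatingWord (if Even (cm i j) then i else j)
          (if Even (cm i j) then j else i) (cm i j)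
        ++ CoxeterSystem.alternatingWord i j (cm i j) := by
    rw [two_mul]
    exact alt_add i j (cm i j) (cm i j)
  have hris : cs.rightInvSeq (CoxeterSystem.alternatingWord i j (2 * cm i j))
      = cs.rightInvSeq (CoxeterSystem.alternatingWord i j (cm i j))
        ++ cs.rightInvSeq (CoxeterSystem.alternatingWord i j (cm i j)) := by
    rw [hsplit, ris_append, map_conj_ris_alt cs i j _ hrel]
  rw [hπ, hris, wsgn_self_append, one_mul]
  simp

/-- the sign representation of `W` on `W × ℤˣ` -/
noncomputable def srep : W →* Equiv.Perm (W × ℤˣ) :=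
  cs.lift ⟨fun i => sperm cs i, sperm_liftable cs⟩

lemma srep_simple (i : B) : srep cs (cs.simple i) = sperm cs i :=
  cs.lift_apply_simple (sperm_liftable cs) i

lemma srep_wordProd (l : List B) : srep cs (cs.wordProd l) = ((l.map (sperm cs)).prod) := by
  induction l with
  | nil => simp [cs.wordProd_nil]
  | cons i t ih => rw [cs.wordProd_cons, map_mul, srep_simple, List.map_cons, List.prod_cons, ih]

/-- word-independence of the parity of the number of occurrences in the
right inversion sequence -/
lemma wsgn_ris_eq (l l' : List B) (h : cs.wordProd l = cs.wordProd l') (w : W) :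
    wsgn w (cs.rightInvSeq l) = wsgn w (cs.rightInvSeq l') := by
  have h1 := prod_sperm_apply cs l w 1
  have h2 := prod_sperm_apply cs l' w 1
  rw [← srep_wordProd] at h1
  rw [← srep_wordProd] at h2
  rw [h] at h1
  rw [h1] at h2
  have := (Prod.mk.injEq _ _ _ _).mp h2
  simpa using this.2

/-- strong exchange for a simple right descent -/
theorem simple_mem_ris (w : W) (r : B) (hd : cs.IsRightDescent w r)
    {ω : List B} (hred : cs.IsReduced ω) (hw : cs.wordProd ω = w) :
    cs.simple r ∈ cs.rightInvSeq ω := by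
  obtain ⟨δ, hδlen, hδ⟩ := cs.exists_reduced_word (w * cs.simple r)
  have hwδ : cs.wordProd (δ ++ [r]) = w := by
    rw [cs.wordProd_append, cs.wordProd_singleton, ← hδ, cs.simple_mul_simple_cancel_right]
  have hsgn := wsgn_ris_eq cs ω (δ ++ [r]) (by rw [hw, hwδ]) (cs.simple r)
  have hredδ : cs.IsReduced δ := by
    unfold CoxeterSystem.IsReduced
    exact hδlen
  have hnot : cs.simple r ∉ cs.rightInvSeq δ := by
    intro hmem
    have hinv := cs.isRightInversion_of_mem_rightInvSeq hredδ hmem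
    have : cs.length (cs.wordProd δ * cs.simple r) < cs.length (cs.wordProd δ) := hinv.2
    rw [← hδ, cs.simple_mul_simple_cancel_right] at this
    exact (Nat.lt_asymm hd) this
  have hrhs : wsgn (cs.simple r) (cs.rightInvSeq (δ ++ [r])) = -1 := by
    rw [ris_append, wsgn_append]
    have h1 : wsgn (cs.simple r) ((cs.rightInvSeq δ).map
        (fun t => (cs.wordProd [r])⁻¹ * t * cs.wordProd [r])) = 1 := by
      apply wsgn_not_mem
      intro hmem
      obtain ⟨t, htmem, hteq⟩ := List.mem_map.mp hmem
      apply hnot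
      have : t = cs.simple r := by
        rw [cs.wordProd_singleton, cs.inv_simple] at hteq
        have := congrArg (fun z => cs.simple r * z * cs.simple r) hteq
        simpa [mul_assoc, cs.simple_mul_simple_cancel_left,
          cs.simple_mul_simple_cancel_right] using this
      rwa [this] at htmem
    rw [h1, one_mul]
    have : cs.rightInvSeq [r] = [cs.simple r] := by
      rw [show ([r] : List B) = r :: [] from rfl, ris_cons]
      simp
    rw [this, wsgn]
    simp
  rw [hrhs] at hsgn
  by_contra hmem
  rw [wsgn_not_mem _ _ hmem] at hsgn
  exact absurd hsgn (by decide)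

/-- the key lifting lemma -/
theorem simple_mul_eq_mul_simple (w : W) (i r : B)
    (h1 : ¬ cs.IsLeftDescent w i) (h2 : ¬ cs.IsRightDescent w r)
    (h3 : cs.length (cs.simple i * w * cs.simple r) < cs.length (cs.simple i * w)) :
    cs.simple i * w = w * cs.simple r := by
  obtain ⟨ω, hlen, hw⟩ := cs.exists_reduced_word w
  have hredω : cs.IsReduced ω := by unfold CoxeterSystem.IsReduced; exact hlen
  have hl : cs.length (cs.simple i * w) = cs.length w + 1 := cs.not_isLeftDescent_iff.mp h1
  have hred : cs.IsReduced (i :: ω) := by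
    unfold CoxeterSystem.IsReduced
    rw [cs.wordProd_cons, ← hw, hl, List.length_cons, hw,
      show cs.length (cs.wordProd ω) = ω.length from hlen]
  have hd : cs.IsRightDescent (cs.simple i * w) r := h3
  have hmem := simple_mem_ris cs (cs.simple i * w) r hd hred
    (by rw [cs.wordProd_cons, ← hw])
  rw [ris_cons] at hmem
  rcases List.mem_cons.mp hmem with h | h
  · rw [← hw] at h
    -- h : cs.simple r = w⁻¹ * cs.simple i * w
    rw [h]
    group
  · exfalso
    have hinv := cs.isRightInversion_of_mem_rightInvSeq hredω h
    have : cs.length (w * cs.simple r) < cs.length w := by rw [hw]; exact hinv.2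
    exact h2 this

end Lift

end StrongExchange

section Geom
open CoxeterSystem List Real
variable [Fintype B]

/-- coefficients of the standard bilinear form -/
noncomputable def gcoef (cm : CoxeterMatrix B) (a b : B) : ℝ :=
  if cm a b = 0 then -1 else -Real.cos (Real.pi / cm a b)

lemma gcoef_diag (a : B) : gcoef cm a a = 1 := by
  unfold gcoef
  rw [if_neg (by rw [cm.diagonal]; norm_num), cm.diagonal]
  norm_num

lemma gcoef_symm (a b : B) : gcoef cm a b = gcoef cm b a := by
  unfold gcoef; rw [cm.symmetric a b]

/-- indicator vector -/
noncomputable def gsingle (a : B) : B → ℝ := fun t => if t = a then 1 else 0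

/-- the linear functional `v ↦ ⟨α_a, v⟩` -/
noncomputable def gP (cm : CoxeterMatrix B) (a : B) (v : B → ℝ) : ℝ :=
  ∑ t, gcoef cm a t * v t

/-- the geometric reflection -/
noncomputable def grefl (cm : CoxeterMatrix B) (a : B) : Function.End (B → ℝ) :=
  fun v => v - (2 * gP cm a v) • gsingle a

lemma gP_sub_single (t s : B) (u : B → ℝ) (r : ℝ) :
    gP cm t (u - r • gsingle s) = gP cm t u - r * gcoef cm t s := by
  unfold gP
  have h1 : ∀ x : B, gcoef cm t x * (u - r • gsingle s) x
      = gcoef cm t x * u x - (if x = s then gcoef cm t x * r else 0) := by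
    intro x
    by_cases hx : x = s
    · subst hx
      simp [gsingle, mul_sub]
    · simp [gsingle, hx]
  calc ∑ x, gcoef cm t x * (u - r • gsingle s) x
      = ∑ x, (gcoef cm t x * u x - (if x = s then gcoef cm t x * r else 0)) :=
        Finset.sum_congr rfl (fun x _ => h1 x)
    _ = (∑ x, gcoef cm t x * u x) - ∑ x, (if x = s then gcoef cm t x * r else 0) :=
        Finset.sum_sub_distrib _ _
    _ = (∑ x, gcoef cm t x * u x) - r * gcoef cm t s := by
        rw [Finset.sum_ite_eq' Finset.univ s (fun x => gcoef cm t x * r)]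
        simp [mul_comm]

lemma gP_grefl (t a : B) (v : B → ℝ) :
    gP cm t (grefl cm a v) = gP cm t v - 2 * gP cm a v * gcoef cm t a := by
  unfold grefl
  rw [gP_sub_single]

lemma grefl_apply_ne (a : B) (v : B → ℝ) (t : B) (h : t ≠ a) :
    grefl cm a v t = v t := by
  unfold grefl
  simp [gsingle, h]

lemma grefl_invol (a : B) : grefl cm a * grefl cm a = 1 := by
  funext v
  show grefl cm a (grefl cm a v) = v
  have h1 : gP cm a (grefl cm a v) = - gP cm a v := by
    rw [gP_grefl, gcoef_diag]; ring
  show grefl cm a v - (2 * gP cm a (grefl cm a v)) • gsingle a = v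
  rw [h1]
  show v - (2 * gP cm a v) • gsingle a - (2 * -gP cm a v) • gsingle a = v
  funext t
  simp only [Pi.sub_apply, Pi.smul_apply, smul_eq_mul]
  ring


lemma gP_sub (t : B) (u u' : B → ℝ) : gP cm t (u - u') = gP cm t u - gP cm t u' := by
  unfold gP
  rw [← Finset.sum_sub_distrib]
  exact Finset.sum_congr rfl (fun x _ => by simp [mul_sub])

lemma gP_add (t : B) (u u' : B → ℝ) : gP cm t (u + u') = gP cm t u + gP cm t u' := by
  unfold gP
  rw [← Finset.sum_add_distrib]
  exact Finset.sum_congr rfl (fun x _ => by simp [mul_add])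

lemma gP_smul (t : B) (r : ℝ) (u : B → ℝ) : gP cm t (r • u) = r * gP cm t u := by
  unfold gP
  rw [Finset.mul_sum]
  exact Finset.sum_congr rfl (fun x _ => by simp; ring)

lemma gP_gsingle (t s : B) : gP cm t (gsingle s) = gcoef cm t s := by
  unfold gP gsingle
  rw [Finset.sum_congr rfl (fun x _ => by rw [mul_ite, mul_one, mul_zero]),
    Finset.sum_ite_eq' Finset.univ s (fun x => gcoef cm t x)]
  simp

section PairRel

variable {a b : B} {c : ℝ}

lemma gP_a_mul (hab : gcoef cm a b = -c) (v : B → ℝ) :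
    gP cm a ((grefl cm a * grefl cm b) v) = -(gP cm a v) - 2*c*(gP cm b v) := by
  show gP cm a (grefl cm a (grefl cm b v)) = _
  rw [gP_grefl, gP_grefl, gcoef_diag, hab]
  ring

lemma gP_b_mul (hab : gcoef cm a b = -c) (hba : gcoef cm b a = -c) (v : B → ℝ) :
    gP cm b ((grefl cm a * grefl cm b) v) = 2*c*(gP cm a v) + (4*c^2-1)*(gP cm b v) := by
  show gP cm b (grefl cm a (grefl cm b v)) = _
  rw [gP_grefl, gP_grefl, gP_grefl, gcoef_diag, hab, hba]
  ring

lemma coord_mul (hne : a ≠ b) (v : B → ℝ) (t : B) (h1 : t ≠ a) (h2 : t ≠ b) :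
    (grefl cm a * grefl cm b) v t = v t := by
  show grefl cm a (grefl cm b v) t = _
  rw [grefl_apply_ne a _ t h1, grefl_apply_ne b _ t h2]

lemma coord_pow (hne : a ≠ b) (n : ℕ) (v : B → ℝ) (t : B) (h1 : t ≠ a) (h2 : t ≠ b) :
    ((grefl cm a * grefl cm b) ^ n) v t = v t := by
  induction n generalizing v with
  | zero => rfl
  | succ k ih =>
    rw [pow_succ]
    show ((grefl cm a * grefl cm b) ^ k) ((grefl cm a * grefl cm b) v) t = v t
    rw [ih ((grefl cm a * grefl cm b) v), coord_mul hne v t h1 h2]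

end PairRel

section MainRel

variable {a b : B}

lemma g_apply (v : B → ℝ) :
    (grefl cm a * grefl cm b) v = v - (2 * gP cm b v) • gsingle b
      - (2 * (gP cm a v - 2 * gP cm b v * gcoef cm a b)) • gsingle a := by
  show grefl cm a (grefl cm b v) = _
  have h1 : grefl cm b v = v - (2 * gP cm b v) • gsingle b := rfl
  have h2 : grefl cm a (grefl cm b v) = grefl cm b v
      - (2 * gP cm a (grefl cm b v)) • gsingle a := rfl
  rw [h2, h1]
  have h3 : gP cm a (v - (2 * gP cm b v) • gsingle b)
      = gP cm a v - 2 * gP cm b v * gcoef cm a b := gP_sub_single a b v _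
  rw [h3]

/-- the case `m = 2` -/
lemma grefl_sq (hne : a ≠ b) (hab : gcoef cm a b = 0) (hba : gcoef cm b a = 0) :
    (grefl cm a * grefl cm b) ^ 2 = 1 := by
  have hPa := gP_a_mul (cm := cm) (a := a) (b := b) (c := 0) (by rw [hab]; ring)
  have hPb := gP_b_mul (cm := cm) (a := a) (b := b) (c := 0)
    (by rw [hab]; ring) (by rw [hba]; ring)
  funext v
  show ((grefl cm a * grefl cm b) ^ 2) v = v
  have h2 : ((grefl cm a * grefl cm b) ^ 2) v
      = (grefl cm a * grefl cm b) ((grefl cm a * grefl cm b) v) := by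
    rw [pow_two]; rfl
  rw [h2, g_apply ((grefl cm a * grefl cm b) v), hPa v, hPb v, g_apply v, hab]
  module

set_option maxHeartbeats 1000000 in
/-- the case `m ≥ 3` -/
lemma grefl_pow (hne : a ≠ b) (m : ℕ) (hm : 3 ≤ m)
    (hab : gcoef cm a b = -Real.cos (Real.pi / m))
    (hba : gcoef cm b a = -Real.cos (Real.pi / m)) :
    (grefl cm a * grefl cm b) ^ m = 1 := by
  set θ := Real.pi / m with hθ
  set c := Real.cos θ with hc
  set E : ℂ := Complex.exp ((2 * θ : ℝ) * Complex.I) with hE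
  have hmR : (0:ℝ) < m := by positivity
  have hθpos : 0 < θ := by positivity
  have hθlt : θ < Real.pi / 2 := by
    rw [hθ]
    rw [div_lt_div_iff₀ hmR two_pos]
    have : (2:ℝ) < 3 := by norm_num
    nlinarith [Real.pi_pos, show (3:ℝ) ≤ m by exact_mod_cast hm]
  have h2θlt : 2 * θ < Real.pi := by linarith
  have hsin2θ : 0 < Real.sin (2 * θ) :=
    Real.sin_pos_of_pos_of_lt_pi (by linarith) h2θlt
  have hcpos : 0 < c := Real.cos_pos_of_mem_Ioo ⟨by linarith, hθlt⟩
  have hclt : c ^ 2 < 1 := by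
    have hs : 0 < Real.sin θ := Real.sin_pos_of_pos_of_lt_pi hθpos (by linarith)
    nlinarith [Real.sin_sq_add_cos_sq θ]
  have hEre : E = Complex.ofReal (Real.cos (2 * θ)) +
      Complex.ofReal (Real.sin (2 * θ)) * Complex.I := by
    rw [hE, Complex.exp_mul_I, Complex.ofReal_cos, Complex.ofReal_sin]
  have hE2 : E ^ 2 = ((4 * c ^ 2 - 2 : ℝ) : ℂ) * E - 1 := by
    have hcos2 : Real.cos (2 * θ) = 2 * c ^ 2 - 1 := Real.cos_two_mul θ
    have hsc : Real.sin (2 * θ) ^ 2 = 1 - Real.cos (2 * θ) ^ 2 := by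
      nlinarith [Real.sin_sq_add_cos_sq (2 * θ)]
    rw [hEre, pow_two]
    apply Complex.ext
    · simp only [Complex.mul_re, Complex.mul_im, Complex.add_re, Complex.add_im,
        Complex.sub_re, Complex.sub_im, Complex.ofReal_re, Complex.ofReal_im,
        Complex.I_re, Complex.I_im, Complex.one_re, Complex.one_im]
      nlinarith [hcos2, hsc]
    · simp only [Complex.mul_re, Complex.mul_im, Complex.add_re, Complex.add_im,
        Complex.sub_re, Complex.sub_im, Complex.ofReal_re, Complex.ofReal_im,
        Complex.I_re, Complex.I_im, Complex.one_re, Complex.one_im]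
      nlinarith [hcos2, hsc]
  have hEm : E ^ m = 1 := by
    rw [hE, ← Complex.exp_nat_mul]
    have harg : (m : ℂ) * ((2 * θ : ℝ) * Complex.I) = 2 * (Real.pi : ℂ) * Complex.I := by
      have hre : (m : ℝ) * (2 * θ) = 2 * Real.pi := by
        rw [hθ]; field_simp
      calc (m : ℂ) * ((2 * θ : ℝ) * Complex.I)
          = (((m : ℝ) * (2 * θ) : ℝ) : ℂ) * Complex.I := by push_cast; ring
        _ = 2 * (Real.pi : ℂ) * Complex.I := by rw [hre]; push_cast; ring
    rw [harg, Complex.exp_two_pi_mul_I]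
  set g := grefl cm a * grefl cm b with hg
  have hPa := gP_a_mul (cm := cm) (a := a) (b := b) (c := c) hab
  have hPb := gP_b_mul (cm := cm) (a := a) (b := b) (c := c) hab hba
  set ψ : (B → ℝ) → ℂ := fun v =>
    ((2 * c : ℝ) : ℂ) * ((gP cm a v : ℝ) : ℂ) + (1 + E) * ((gP cm b v : ℝ) : ℂ) with hψ
  have hψg : ∀ v, ψ (g v) = E * ψ v := by
    intro v
    rw [hψ]
    simp only
    rw [hPa v, hPb v]
    have hE2' := hE2
    push_cast at hE2'
    push_cast
    linear_combination (-((gP cm b v : ℝ) : ℂ)) * hE2'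
  have hψpow : ∀ n v, ψ ((g ^ n) v) = E ^ n * ψ v := by
    intro n
    induction n with
    | zero => intro v; rw [pow_zero, pow_zero, one_mul]; rfl
    | succ k ih =>
      intro v
      rw [pow_succ]
      show ψ ((g ^ k) (g v)) = _
      rw [ih (g v), hψg v, pow_succ]
      ring
  funext v
  show (g ^ m) v = v
  set v' := (g ^ m) v with hv'
  have hcoord : ∀ t, t ≠ a → t ≠ b → v' t = v t := fun t h1 h2 =>
    coord_pow hne m v t h1 h2
  have hψeq : ψ v' = ψ v := by rw [hv', hψpow m v, hEm, one_mul]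
  set δa := v' a - v a with hδa
  set δb := v' b - v b with hδb
  have hdiff : v' - v = δa • gsingle a + δb • gsingle b := by
    funext t
    by_cases h1 : t = a
    · subst h1
      simp [gsingle, hne, Ne.symm hne, hδa]
    · by_cases h2 : t = b
      · subst h2
        simp [gsingle, hne, Ne.symm hne, h1, hδb]
      · simp [gsingle, h1, h2, hcoord t h1 h2]
  have hPadiff : gP cm a v' - gP cm a v = δa - c * δb := by
    rw [← gP_sub, hdiff, gP_add, gP_smul, gP_smul, gP_gsingle, gP_gsingle,
      gcoef_diag, hab]
    ring
  have hPbdiff : gP cm b v' - gP cm b v = -c * δa + δb := by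
    rw [← gP_sub, hdiff, gP_add, gP_smul, gP_smul, gP_gsingle, gP_gsingle,
      gcoef_diag, hba]
    ring
  have hzero : ((2 * c : ℝ) : ℂ) * ((δa - c * δb : ℝ) : ℂ)
      + (1 + E) * ((-c * δa + δb : ℝ) : ℂ) = 0 := by
    have h0 := hψeq
    rw [hψ] at h0
    simp only at h0
    rw [← hPadiff, ← hPbdiff]
    push_cast at h0 ⊢
    linear_combination h0
  have hY : -c * δa + δb = 0 := by
    have him := congrArg Complex.im hzero
    rw [hEre] at him
    simp only [Complex.add_im, Complex.mul_im, Complex.add_re, Complex.mul_re,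
      Complex.ofReal_re, Complex.ofReal_im, Complex.I_re, Complex.I_im,
      Complex.one_re, Complex.one_im, Complex.zero_im] at him
    have : Real.sin (2 * θ) * (-c * δa + δb) = 0 := by linarith
    rcases mul_eq_zero.mp this with h | h
    · exact absurd h (ne_of_gt hsin2θ)
    · exact h
  have hX : δa - c * δb = 0 := by
    have hre := congrArg Complex.re hzero
    rw [hEre] at hre
    simp only [Complex.add_re, Complex.mul_re, Complex.add_im, Complex.mul_im,
      Complex.ofReal_re, Complex.ofReal_im, Complex.I_re, Complex.I_im,
      Complex.one_re, Complex.one_im, Complex.zero_re] at hre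
    have hre2 : 2 * c * (δa - c * δb) = 0 := by
      linear_combination hre - (1 + Real.cos (2 * θ)) * hY
    rcases mul_eq_zero.mp hre2 with h | h
    · exfalso; nlinarith [hcpos]
    · exact h
  have hda : δa = 0 := by
    have h1 : δa * (1 - c ^ 2) = 0 := by linear_combination hX + c * hY
    rcases mul_eq_zero.mp h1 with h | h
    · exact h
    · exfalso; linarith [hclt]
  have hdb : δb = 0 := by
    have := hY
    rw [hda] at this
    linarith
  funext t
  by_cases h1 : t = a
  · subst h1
    have : v' t - v t = 0 := hda
    show v' t = v t
    linarith
  · by_cases h2 : t = b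
    · subst h2
      have : v' t - v t = 0 := hdb
      show v' t = v t
      linarith
    · exact hcoord t h1 h2

end MainRel

theorem grefl_liftable : cm.IsLiftable (fun i => grefl cm i) := by
  intro a b
  by_cases hab : a = b
  · subst hab
    rw [cm.diagonal, pow_one]
    exact grefl_invol a
  · rcases hm : cm.M a b with _ | k
    · rw [pow_zero]
    · rcases k with _ | k'
      · exact absurd hm (cm.off_diagonal a b hab)
      · -- cm a b = k' + 2
        have hab2 : gcoef cm a b = -Real.cos (Real.pi / (cm.M a b)) := by
          unfold gcoef
          rw [if_neg (by rw [hm]; omega)]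
        have hba2 : gcoef cm b a = -Real.cos (Real.pi / (cm.M a b)) := by
          rw [gcoef_symm, hab2]
        rcases k' with _ | k''
        · -- m = 2 : cos (π/2) = 0
          have h0 : gcoef cm a b = 0 := by
            rw [hab2, hm]
            norm_num [Real.cos_pi_div_two]
          have h0' : gcoef cm b a = 0 := by rw [gcoef_symm, h0]
          show (grefl cm a * grefl cm b) ^ (0 + 1 + 1) = 1
          exact grefl_sq hab h0 h0'
        · -- m = k'' + 3 ≥ 3
          rw [hm] at hab2 hba2
          show (grefl cm a * grefl cm b) ^ (k'' + 1 + 1 + 1) = 1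
          exact grefl_pow hab (k'' + 1 + 1 + 1) (by omega) hab2 hba2

theorem simple_injective (cs : CoxeterSystem cm W) {i j : B} (hij : i ≠ j) :
    cs.simple i ≠ cs.simple j := by
  intro h
  have hlift : (cs.lift ⟨fun t => grefl cm t, grefl_liftable⟩) (cs.simple i)
      = (cs.lift ⟨fun t => grefl cm t, grefl_liftable⟩) (cs.simple j) := by rw [h]
  rw [cs.lift_apply_simple, cs.lift_apply_simple] at hlift
  have happ := congrFun (congrFun hlift (gsingle j)) j
  have hj : grefl cm j (gsingle j) j = -1 := by
    show (gsingle j - (2 * gP cm j (gsingle j)) • gsingle j) j = -1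
    rw [gP_gsingle, gcoef_diag]
    simp [gsingle]
    norm_num
  have hi : grefl cm i (gsingle j) j = 1 := by
    show (gsingle j - (2 * gP cm i (gsingle j)) • gsingle i) j = 1
    simp [gsingle, Ne.symm hij]
  rw [hi, hj] at happ
  norm_num at happ

end Geom


/-- Lemma 4.4: if `x = x₁·w_{J'} ∈ P_{J,J'}` with `J' = {r₁, r₂}`,
`r₁ ≠ r₂`, `x₁ ∈ B_{J'}`, and `L(x₁) ≠ J`, then `L(x₁ r₁) ≠ J` or `L(x₁ r₂) ≠ J`. -/
theorem stmt18 [Fintype B] (hB : Fintype.card B = 3)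
    (cs : CoxeterSystem cm W) (L : W → ℤ) (hL : IsWeightFunction cs L)
    (J J' : Set B) (r₁ r₂ : B) (hr : r₁ ≠ r₂) (hJ' : J' = {r₁, r₂})
    (wJ' : W) (hwJ' : IsLongestIn cs J' wJ')
    (x x₁ : W) (hxl : lD cs x = J) (hxr : rD cs x = J')
    (hx₁ : x = x₁ * wJ') (hred : cs.length x = cs.length x₁ + cs.length wJ')
    (hx₁B : x₁ ∈ BJ cs J')
    (hne : lD cs x₁ ≠ J) :
    lD cs (x₁ * cs.simple r₁) ≠ J ∨ lD cs (x₁ * cs.simple r₂) ≠ J := by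
  by_contra hcon
  push_neg at hcon
  obtain ⟨hD1, hD2⟩ := hcon
  apply hne
  have hr1' : ¬ cs.IsRightDescent x₁ r₁ := hx₁B r₁ (by rw [hJ']; left; rfl)
  have hr2' : ¬ cs.IsRightDescent x₁ r₂ := hx₁B r₂ (by rw [hJ']; right; rfl)
  have l1 : cs.length (x₁ * cs.simple r₁) = cs.length x₁ + 1 :=
    cs.not_isRightDescent_iff.mp hr1'
  have l2 : cs.length (x₁ * cs.simple r₂) = cs.length x₁ + 1 :=
    cs.not_isRightDescent_iff.mp hr2'
  ext i
  simp only [lD, Set.mem_setOf_eq]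
  constructor
  · intro hd
    have hd1 : cs.IsLeftDescent (x₁ * cs.simple r₁) i := by
      unfold CoxeterSystem.IsLeftDescent
      have h2 : cs.length (cs.simple i * x₁) + 1 = cs.length x₁ :=
        cs.isLeftDescent_iff.mp hd
      calc cs.length (cs.simple i * (x₁ * cs.simple r₁))
          = cs.length ((cs.simple i * x₁) * cs.simple r₁) := by rw [mul_assoc]
        _ ≤ cs.length (cs.simple i * x₁) + cs.length (cs.simple r₁) :=
            cs.length_mul_le _ _
        _ = cs.length (cs.simple i * x₁) + 1 := by rw [cs.length_simple]
        _ < cs.length x₁ + 1 := by omega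
        _ = cs.length (x₁ * cs.simple r₁) := l1.symm
    rw [← hD1]
    exact hd1
  · intro hiJ
    by_contra hd
    have key : ∀ r : B, ¬ cs.IsRightDescent x₁ r →
        cs.length (x₁ * cs.simple r) = cs.length x₁ + 1 →
        cs.IsLeftDescent (x₁ * cs.simple r) i →
        cs.simple i * x₁ = x₁ * cs.simple r := by
      intro r hrr lr hdr
      apply simple_mul_eq_mul_simple cs x₁ i r hd hrr
      have h3 : cs.length (cs.simple i * x₁) = cs.length x₁ + 1 :=
        cs.not_isLeftDescent_iff.mp hd
      have h4 : cs.length (cs.simple i * (x₁ * cs.simple r))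
          < cs.length (x₁ * cs.simple r) := hdr
      rw [← mul_assoc] at h4
      omega
    have d1 : cs.IsLeftDescent (x₁ * cs.simple r₁) i := by
      have : i ∈ lD cs (x₁ * cs.simple r₁) := by rw [hD1]; exact hiJ
      exact this
    have d2 : cs.IsLeftDescent (x₁ * cs.simple r₂) i := by
      have : i ∈ lD cs (x₁ * cs.simple r₂) := by rw [hD2]; exact hiJ
      exact this
    have k1 := key r₁ hr1' l1 d1
    have k2 := key r₂ hr2' l2 d2
    have : cs.simple r₁ = cs.simple r₂ := mul_left_cancel (k1.symm.trans k2)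
    exact simple_injective cs hr this


end Weighted
end
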